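/- If dist(C, P) > 0 (i.e., the singular set C is bounded away from the desired path P), then for every ξ ∈ P the gradients ∇φ₁(ξ), …, ∇φ_{n−1}(ξ) are linearly independent; equivalently, the Jacobian of e at every point of P = e⁻¹(0) is surjective, so that 0 ∈ ℝ^{n−1} is a regular value of e. -/

import Mathlib

/-- The generalized cross product of `n` vectors `p 0, …, p (n-1)` in `ℝ^(n+1)`:
its `k`-th component is `(-1)^k` times the determinant of the `n × n` matrix obtained
from the `n × (n+1)` matrix with rows `p i` by deleting the `k`-th column. -/
noncomputable def gcross {n : ℕ} (p : Fin n → EuclideanSpace ℝ (Fin (n + 1))) :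
    EuclideanSpace ℝ (Fin (n + 1)) :=
  WithLp.toLp 2 fun k => (-1 : ℝ) ^ (k : ℕ) * Matrix.det (Matrix.of fun i j => p i (Fin.succAbove k j))

/-- The guiding vector field `χ(ξ) = ×(∇φ₁(ξ), …, ∇φₙ(ξ)) − N(ξ) K e(ξ)`, where
`N(ξ) K e(ξ) = ∑ i, kᵢ φᵢ(ξ) ∇φᵢ(ξ)`. -/
noncomputable def gvf {n : ℕ} (φ : Fin n → EuclideanSpace ℝ (Fin (n + 1)) → ℝ)
    (kg : Fin n → ℝ) (ξ : EuclideanSpace ℝ (Fin (n + 1))) : EuclideanSpace ℝ (Fin (n + 1)) :=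
  gcross (fun i => gradient (φ i) ξ) - ∑ i, (kg i * φ i ξ) • gradient (φ i) ξ

open scoped RealInnerProductSpace

lemma euclidean_sum_apply {ι κ : Type*} [Fintype ι] [Fintype κ]
    (f : ι → EuclideanSpace ℝ κ) (m : κ) : (∑ i, f i) m = ∑ i, f i m := by
  rw [show (∑ i, f i) m = EuclideanSpace.proj m (∑ i, f i) from rfl, map_sum]
  rfl

lemma gcross_eq_zero_of_not_li {n : ℕ} {p : Fin n → EuclideanSpace ℝ (Fin (n + 1))}
    (h : ¬ LinearIndependent ℝ p) : gcross p = 0 := by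
  obtain ⟨c, hc, i0, hc0⟩ := Fintype.not_linearIndependent_iff.mp h
  ext k
  show (-1 : ℝ) ^ (k : ℕ) * _ = 0
  have hdet : Matrix.det (Matrix.of fun i j => p i (Fin.succAbove k j)) = 0 := by
    rw [← Matrix.exists_vecMul_eq_zero_iff]
    refine ⟨c, fun h0 => hc0 (congrFun h0 i0), ?_⟩
    funext j
    have := congrArg (fun v : EuclideanSpace ℝ (Fin (n + 1)) => v (Fin.succAbove k j)) hc
    simp only [PiLp.zero_apply] at this
    rw [euclidean_sum_apply] at this
    simpa [Matrix.vecMul, dotProduct, smul_eq_mul] using this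
  simp [hdet]


/-- If the singular set `C` is bounded away from the desired path `P`
(i.e. `dist(C, P) > 0`), then at every point of `P` the gradients
`∇φ₁(ξ), …, ∇φₙ(ξ)` are linearly independent; equivalently the Jacobian of
`e = (φ₁, …, φₙ)` is surjective at every point of `P = e⁻¹(0)`, so `0` is a
regular value of `e`. -/
theorem regular_value_of_dist_pos {n : ℕ} (hn : 1 ≤ n)
    (φ : Fin n → EuclideanSpace ℝ (Fin (n + 1)) → ℝ)
    (hφ : ∀ i, ContDiff ℝ 2 (φ i)) (kg : Fin n → ℝ) (hk : ∀ i, 0 < kg i)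
    (hdist : ∃ d > (0 : ℝ),
      ∀ c ∈ {ξ : EuclideanSpace ℝ (Fin (n + 1)) | gvf φ kg ξ = 0},
      ∀ q ∈ {ξ : EuclideanSpace ℝ (Fin (n + 1)) | ∀ i, φ i ξ = 0}, d ≤ dist c q) :
    ∀ ξ ∈ {ξ : EuclideanSpace ℝ (Fin (n + 1)) | ∀ i, φ i ξ = 0},
      LinearIndependent ℝ (fun i => gradient (φ i) ξ) ∧
      Function.Surjective
        (fderiv ℝ (fun ξ' => (WithLp.toLp 2 (fun i => φ i ξ') : EuclideanSpace ℝ (Fin n))) ξ) := by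
  obtain ⟨d, hd, hsep⟩ := hdist
  intro ξ hξ
  have hχ : gvf φ kg ξ ≠ 0 := by
    intro h0
    have := hsep ξ h0 ξ hξ
    simp at this; linarith
  set g : Fin n → EuclideanSpace ℝ (Fin (n + 1)) := fun i => gradient (φ i) ξ with hg
  have hcross : gcross g ≠ 0 := by
    intro h
    apply hχ
    have hsum : (∑ i, (kg i * φ i ξ) • gradient (φ i) ξ) = 0 := by
      have : ∀ i, φ i ξ = 0 := hξ
      simp [this]
    simp [gvf, ← hg, h, hsum]
  have hli : LinearIndependent ℝ g := by
    by_contra h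
    exact hcross (gcross_eq_zero_of_not_li h)
  refine ⟨hli, ?_⟩
  set E : EuclideanSpace ℝ (Fin (n + 1)) → (Fin n → ℝ) :=
    fun ξ' => (fun i => φ i ξ') with hE
  have hEdiff : DifferentiableAt ℝ E ξ :=
    differentiableAt_pi.mpr fun i => ((hφ i).differentiable (by norm_num)).differentiableAt
  have hLi : ∀ (v : EuclideanSpace ℝ (Fin (n + 1))) i, (fderiv ℝ E ξ) v i = ⟪g i, v⟫ := by
    intro v i
    have h1 : fderiv ℝ (⇑(ContinuousLinearMap.proj (R := ℝ) (φ := fun _ : Fin n => ℝ) i) ∘ E) ξ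
        = (ContinuousLinearMap.proj i).comp (fderiv ℝ E ξ) :=
      ((ContinuousLinearMap.proj i).hasFDerivAt.comp ξ hEdiff.hasFDerivAt).fderiv
    have h2 : (⇑(ContinuousLinearMap.proj (R := ℝ) (φ := fun _ : Fin n => ℝ) i) ∘ E) = φ i := rfl
    rw [h2] at h1
    have : ⟪g i, v⟫ = fderiv ℝ (φ i) ξ v := by
      simp [hg, gradient, InnerProductSpace.toDual_symm_apply]
    rw [this, h1]
    rfl
  let T : (Fin n → ℝ) →ₗ[ℝ] EuclideanSpace ℝ (Fin (n + 1)) :=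
    { toFun := fun c => ∑ j, c j • g j
      map_add' := by intro a b; simp [add_smul, Finset.sum_add_distrib]
      map_smul' := by intro r a; simp [smul_smul, Finset.smul_sum] }
  let M : (Fin n → ℝ) →ₗ[ℝ] (Fin n → ℝ) :=
    ((fderiv ℝ E ξ) : EuclideanSpace ℝ (Fin (n + 1)) →ₗ[ℝ] (Fin n → ℝ)).comp T
  have hMzero : ∀ c, M c = 0 → c = 0 := by
    intro c hc
    have hw : (∑ j, c j • g j) = 0 := by
      have hinner : ∀ i, ⟪g i, ∑ j, c j • g j⟫ = 0 := by
        intro i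
        have := congrFun hc i
        simpa [M, T, hLi] using this
      have : ⟪∑ j, c j • g j, ∑ j, c j • g j⟫ = 0 := by
        rw [sum_inner]
        refine Finset.sum_eq_zero fun i _ => ?_
        rw [real_inner_smul_left, hinner i, mul_zero]
      exact inner_self_eq_zero.mp this
    have := Fintype.linearIndependent_iff.mp hli c hw
    funext i; exact this i
  have hMinj : Function.Injective M := by
    intro a b hab
    have : M (a - b) = 0 := by rw [map_sub, hab, sub_self]
    exact sub_eq_zero.mp (hMzero _ this)
  have hMsurj : Function.Surjective M := LinearMap.injective_iff_surjective.mp hMinj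
  have hcomp : fderiv ℝ (fun ξ' => (WithLp.toLp 2 (fun i => φ i ξ') : EuclideanSpace ℝ (Fin n))) ξ
      = (EuclideanSpace.equiv (Fin n) ℝ).symm.toContinuousLinearMap.comp (fderiv ℝ E ξ) :=
    ((EuclideanSpace.equiv (Fin n) ℝ).symm.toContinuousLinearMap.hasFDerivAt.comp ξ hEdiff.hasFDerivAt).fderiv
  rw [hcomp]
  intro y
  obtain ⟨c, hc⟩ := hMsurj (WithLp.ofLp y)
  refine ⟨T c, ?_⟩
  rw [ContinuousLinearMap.comp_apply]
  show (EuclideanSpace.equiv (Fin n) ℝ).symm (M c) = y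
  rw [hc]
  rfl
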